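/- Let G = (V, E) be a finite DAG, let v ∈ V, and let u_1, …, u_k be an enumeration without repetition of all out-neighbors of v that is consistent with reachability: whenever i ≠ j and there is a directed path from u_i to u_j, then i < j. Then for every i ∈ {1, …, k}, |Desc(u_i)| ≤ |Desc(v)| − i. -/

import Mathlib

/-!
`Desc(u i)` and the first `i + 1` children `u 0, …, u i` are disjoint subsets of `Desc(v)`:
a child `u j` with `j ≤ i` is not a descendant of `u i`, by acyclicity for `j = i` and by the
ordering of the enumeration otherwise.
-/

open scoped Classical

/-- `descSet E v`: the set of descendants of `v`, i.e. vertices reachable from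
`v` by a directed path of length ≥ 1 (in a DAG these are automatically ≠ `v`). -/
noncomputable def descSet {V : Type*} [Fintype V] (E : V → V → Prop) (v : V) : Finset V :=
  Finset.univ.filter (fun u => Relation.TransGen E v u)

section Descendants

variable {V : Type*} [Fintype V] {E : V → V → Prop}

@[simp]
theorem mem_descSet {v w : V} : w ∈ descSet E v ↔ Relation.TransGen E v w := by
  simp [descSet]

theorem descSet_subset_descSet_of_transGen {v w : V} (h : Relation.TransGen E v w) :
    descSet E w ⊆ descSet E v :=
  fun _ hx => mem_descSet.mpr (h.trans (mem_descSet.mp hx))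

variable {v : V} {k : ℕ} {u : Fin k → V}

theorem image_Iic_subset_descSet (hchild : ∀ j, E v (u j)) (i : Fin k) :
    (Finset.Iic i).image u ⊆ descSet E v := by
  intro x hx
  obtain ⟨j, -, rfl⟩ := Finset.mem_image.mp hx
  exact mem_descSet.mpr (.single (hchild j))

theorem disjoint_descSet_image_Iic (hacyc : ∀ v : V, ¬ Relation.TransGen E v v)
    (hord : ∀ i j : Fin k, i ≠ j → Relation.TransGen E (u i) (u j) → i < j) (i : Fin k) :
    Disjoint (descSet E (u i)) ((Finset.Iic i).image u) := by
  rw [Finset.disjoint_right]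
  intro x hx hdesc
  obtain ⟨j, hji, rfl⟩ := Finset.mem_image.mp hx
  rw [mem_descSet] at hdesc
  rcases eq_or_ne i j with rfl | hij
  · exact hacyc _ hdesc
  · exact (hord i j hij hdesc).not_ge (Finset.mem_Iic.mp hji)

end Descendants

/-- Let `u 0, …, u (k-1)` be an enumeration without repetition of
all out-neighbors of `v`, consistent with reachability (if `i ≠ j` and there is
a directed path from `u i` to `u j` then `i < j`).  Then for every `i`,
`|Desc(u i)| ≤ |Desc(v)| − (i+1)` (stated additively, since the right-hand side
never underflows). -/
theorem stmt2 {V : Type*} [Fintype V] (E : V → V → Prop)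
    (hacyc : ∀ v : V, ¬ Relation.TransGen E v v)
    (v : V) (k : ℕ) (u : Fin k → V)
    (hinj : Function.Injective u)
    (hrange : ∀ w : V, E v w ↔ ∃ i : Fin k, u i = w)
    (hord : ∀ i j : Fin k, i ≠ j → Relation.TransGen E (u i) (u j) → i < j)
    (i : Fin k) :
    (descSet E (u i)).card + (i.val + 1) ≤ (descSet E v).card := by
  have hchild : ∀ j, E v (u j) := fun j => (hrange (u j)).mpr ⟨j, rfl⟩
  have hfirst : ((Finset.Iic i).image u).card = i.val + 1 := by
    rw [Finset.card_image_of_injective _ hinj, Fin.card_Iic]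
  calc (descSet E (u i)).card + (i.val + 1)
      = (descSet E (u i) ∪ (Finset.Iic i).image u).card := by
        rw [Finset.card_union_of_disjoint (disjoint_descSet_image_Iic hacyc hord i), hfirst]
    _ ≤ (descSet E v).card :=
        Finset.card_le_card <| Finset.union_subset
          (descSet_subset_descSet_of_transGen (.single (hchild i)))
          (image_Iic_subset_descSet hchild i)
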